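/- arXiv:1901.00044 — 4 statements merged into one kernel-verified Lean document; each statement's English description precedes it below -/
import Mathlib

section
/- Let E be a real Banach space, K ≥ 0, and X : E → E a K-Lipschitz map (LipschitzWith K X). Let φ : E → E be a map such that for every x : E there is a continuous linear map Dφ(x) : E →L[ℝ] E with HasFDerivAt φ (Dφ(x)) x and Dφ(x) (X x) = X (φ x). Suppose Φ, Ψ : ℝ → E are continuous on Set.Ioc 0 1 and satisfy, for every τ ∈ (0,1), HasDerivAt Φ (-(1/τ) • X (Φ τ)) τ and HasDerivAt Ψ (-(1/τ) • X (Ψ τ)) τ, together with the endpoint condition Ψ 1 = φ (Φ 1). Then Ψ τ = φ (Φ τ) for every τ ∈ (0,1]. -/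
/-- Uniqueness for the ODE `y'(τ) = -(1/τ) X(y(τ))` backwards from `τ = 1`: if `X` is Lipschitz
and preserved by the differentiable map `φ`, and `Φ`, `Ψ` both solve the ODE on `(0,1)` and are
continuous on `(0,1]` with `Ψ 1 = φ (Φ 1)`, then `Ψ = φ ∘ Φ` on `(0,1]`. -/
theorem eq_comp_of_hasDerivAt_of_lipschitzWith
    {E : Type*} [NormedAddCommGroup E] [NormedSpace ℝ E] [CompleteSpace E]
    (K : NNReal) (X : E → E) (hX : LipschitzWith K X)
    (φ : E → E)
    (hφ : ∀ x : E, ∃ D : E →L[ℝ] E, HasFDerivAt φ D x ∧ D (X x) = X (φ x))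
    (Φ Ψ : ℝ → E)
    (hΦc : ContinuousOn Φ (Set.Ioc 0 1)) (hΨc : ContinuousOn Ψ (Set.Ioc 0 1))
    (hΦ : ∀ τ ∈ Set.Ioo (0 : ℝ) 1, HasDerivAt Φ (-(1 / τ) • X (Φ τ)) τ)
    (hΨ : ∀ τ ∈ Set.Ioo (0 : ℝ) 1, HasDerivAt Ψ (-(1 / τ) • X (Ψ τ)) τ)
    (hend : Ψ 1 = φ (Φ 1)) :
    ∀ τ ∈ Set.Ioc (0 : ℝ) 1, Ψ τ = φ (Φ τ) := by
  have hφc : Continuous φ :=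
    continuous_iff_continuousAt.2 fun x => (hφ x).choose_spec.1.continuousAt
  intro τ hτ
  rcases eq_or_lt_of_le hτ.2 with h1 | h1
  · rw [h1, hend]
  have hτ0 : 0 < τ := hτ.1
  -- the (time-reversed, clamped) vector field
  set v : ℝ → E → E := fun t y => (1 / max (-t) τ) • X y with hv
  set K' : NNReal := ⟨1 / τ, by positivity⟩ * K with hK'
  have hK'val : (K' : ℝ) = (1 / τ) * K := rfl
  have hvL : ∀ t, LipschitzWith K' (v t) := by
    intro t
    apply LipschitzWith.of_dist_le_mul
    intro x y
    have hm : (0 : ℝ) < max (-t) τ := lt_max_of_lt_right hτ0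
    rw [hv]
    simp only [dist_smul₀, Real.norm_eq_abs, abs_of_pos (by positivity : (0:ℝ) < 1 / max (-t) τ)]
    rw [hK'val, mul_assoc]
    exact mul_le_mul (one_div_le_one_div_of_le hτ0 (le_max_right _ _))
      (hX.dist_le_mul x y) dist_nonneg (by positivity)
  -- Gronwall estimate from b < 1 backwards to τ, via time reversal
  have key : ∀ b ∈ Set.Ioo τ 1, dist (Ψ τ) (φ (Φ τ)) ≤
      dist (Ψ b) (φ (Φ b)) * Real.exp ((K' : ℝ) * 1) := by
    intro b hb
    have hmt : ∀ t ∈ Set.Icc (-b) (-τ), -t ∈ Set.Ioc (0:ℝ) 1 := by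
      intro t ht
      constructor
      · linarith [ht.2, hτ0]
      · linarith [ht.1, hb.2.le]
    have hmo : ∀ t ∈ Set.Ico (-b) (-τ), -t ∈ Set.Ioo (0:ℝ) 1 := by
      intro t ht
      constructor
      · linarith [ht.2, hτ0]
      · linarith [ht.1, hb.2]
    have hmax : ∀ t ∈ Set.Ico (-b) (-τ), max (-t) τ = -t := by
      intro t ht
      exact max_eq_left (by linarith [ht.2])
    have hfc : ContinuousOn (fun t => Ψ (-t)) (Set.Icc (-b) (-τ)) :=
      hΨc.comp continuous_neg.continuousOn hmt
    have hgc : ContinuousOn (fun t => φ (Φ (-t))) (Set.Icc (-b) (-τ)) :=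
      hφc.comp_continuousOn (hΦc.comp continuous_neg.continuousOn hmt)
    have hf' : ∀ t ∈ Set.Ico (-b) (-τ),
        HasDerivWithinAt (fun t => Ψ (-t)) (v t (Ψ (-t))) (Set.Ici t) t := by
      intro t ht
      have h1 := (hΨ (-t) (hmo t ht)).scomp t (hasDerivAt_neg t)
      have : ((-1 : ℝ)) • (-(1 / (-t)) • X (Ψ (-t))) = v t (Ψ (-t)) := by
        rw [hv]; simp only [hmax t ht]
        rw [smul_smul]; ring_nf
      rw [this] at h1
      exact h1.hasDerivWithinAt
    have hg' : ∀ t ∈ Set.Ico (-b) (-τ),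
        HasDerivWithinAt (fun t => φ (Φ (-t))) (v t (φ (Φ (-t)))) (Set.Ici t) t := by
      intro t ht
      obtain ⟨D, hD, hDX⟩ := hφ (Φ (-t))
      have h1 := (hΦ (-t) (hmo t ht)).scomp t (hasDerivAt_neg t)
      have h2 : ((-1 : ℝ)) • (-(1 / (-t)) • X (Φ (-t))) = (1 / (-t)) • X (Φ (-t)) := by
        rw [smul_smul]; ring_nf
      rw [h2] at h1
      have h3 := hD.comp_hasDerivAt t h1
      have : D ((1 / (-t)) • X (Φ (-t))) = v t (φ (Φ (-t))) := by
        rw [map_smul, hDX, hv]; simp only [hmax t ht]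
      rw [this] at h3
      exact h3.hasDerivWithinAt
    have hab : dist (Ψ (-(-b))) (φ (Φ (-(-b)))) ≤ dist (Ψ b) (φ (Φ b)) := by
      rw [neg_neg]
    have := dist_le_of_trajectories_ODE hvL hfc hf' hgc hg' hab (-τ)
      ⟨by linarith [hb.1], le_refl _⟩
    rw [neg_neg] at this
    calc dist (Ψ τ) (φ (Φ τ)) ≤ dist (Ψ b) (φ (Φ b)) * Real.exp ((K':ℝ) * (-τ - -b)) := this
      _ ≤ dist (Ψ b) (φ (Φ b)) * Real.exp ((K':ℝ) * 1) := by
          gcongr <;>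
            first
              | exact dist_nonneg
              | exact K'.coe_nonneg
              | linarith [hτ0, hb.2]
  -- take the limit b → 1⁻
  have hne : (nhdsWithin (1:ℝ) (Set.Ioo τ 1)).NeBot := right_nhdsWithin_Ioo_neBot h1
  have hsub : Set.Ioo τ 1 ⊆ Set.Ioc 0 1 := fun x hx => ⟨lt_trans hτ0 hx.1, hx.2.le⟩
  have h1mem : (1:ℝ) ∈ Set.Ioc (0:ℝ) 1 := ⟨one_pos, le_refl _⟩
  have hΨt : Filter.Tendsto Ψ (nhdsWithin 1 (Set.Ioo τ 1)) (nhds (Ψ 1)) :=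
    (hΨc 1 h1mem).mono_left (nhdsWithin_mono _ hsub)
  have hΦt : Filter.Tendsto Φ (nhdsWithin 1 (Set.Ioo τ 1)) (nhds (Φ 1)) :=
    (hΦc 1 h1mem).mono_left (nhdsWithin_mono _ hsub)
  have hlim : Filter.Tendsto (fun b => dist (Ψ b) (φ (Φ b)) * Real.exp ((K':ℝ) * 1))
      (nhdsWithin 1 (Set.Ioo τ 1)) (nhds 0) := by
    have : Filter.Tendsto (fun b => dist (Ψ b) (φ (Φ b)))
        (nhdsWithin 1 (Set.Ioo τ 1)) (nhds (dist (Ψ 1) (φ (Φ 1)))) :=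
      hΨt.dist (hφc.continuousAt.tendsto.comp hΦt)
    rw [hend, dist_self] at this
    simpa using this.mul_const (Real.exp ((K':ℝ) * 1))
  have hle : dist (Ψ τ) (φ (Φ τ)) ≤ 0 :=
    ge_of_tendsto hlim (Filter.eventually_of_mem self_mem_nhdsWithin fun b hb => key b hb)
  exact eq_of_dist_eq_zero (le_antisymm hle dist_nonneg)
end

section
/- Let X be a topological space, x₀ x : X, γ⁰ γ¹ : Path x₀ x, and α : Path x₀ x₀ a loop at x₀. Let H : Path.Homotopy α (γ⁰.trans γ¹.symm) be a homotopy rel endpoints from α to the concatenation of γ⁰ with the reverse of γ¹. Let m := α (1/2), let p⁰ : Path x₀ m be the path t ↦ α (t/2), and let q : Path m x be the path s ↦ H (s, 1/2) (note H(1, 1/2) = (γ⁰.trans γ¹.symm)(1/2) = γ⁰(1) = x). Then the concatenation p⁰.trans q is path-homotopic to γ⁰ (Path.Homotopic (p⁰.trans q) γ⁰). -/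
/-!
Restrict `H` to the rectangle `I × [0, 1/2]`. Going up the left side and then along the top
traces `p0.trans q`; going along the bottom and then up the right side traces
`(refl x₀).trans γ0`, because `H` is constant on the bottom edge and the first half of
`γ0.trans γ1.symm` is `γ0` at double speed. The rectangle is simply connected, so these two
images are homotopic (`Path.Homotopic.map_trans_evalAt`).
-/

open unitInterval

theorem Path.Homotopic.of_apply_eq {X : Type*} [TopologicalSpace X] {x y x' y' : X}
    {p q : Path x y} {p' q' : Path x' y'} (h : p.Homotopic q)
    (hp : ∀ t, p' t = p t) (hq : ∀ t, q' t = q t) : p'.Homotopic q' := by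
  obtain rfl : x' = x := by simpa using hp 0
  obtain rfl : y' = y := by simpa using hp 1
  rwa [show p' = p from Path.ext (funext hp), show q' = q from Path.ext (funext hq)]

theorem Path.trans_apply_eq_of_apply_eq {X : Type*} [TopologicalSpace X] {x y z x' y' z' : X}
    {p : Path x y} {q : Path y z} {p' : Path x' y'} {q' : Path y' z'}
    (hp : ∀ t, p t = p' t) (hq : ∀ t, q t = q' t) (t : I) :
    (p.trans q) t = (p'.trans q') t := by
  simp only [Path.trans_apply, hp, hq]

@[simps]
def unitInterval.pathZeroTo (s : I) : Path 0 s where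
  toFun t := s * t
  source' := mul_zero s
  target' := mul_one s

/-- Given a homotopy `H` (rel endpoints) from a loop `α` at `x₀` to `γ0.trans γ1.symm`, the path
`β0` obtained by traversing the first half of `α` (i.e. `t ↦ α (t/2)`) and then following the
track `s ↦ H (s, 1/2)` of the midpoint under the homotopy is path-homotopic to `γ0`. -/
theorem homotopic_firstHalf_trans_track
    {X : Type*} [TopologicalSpace X] {x₀ x : X}
    (γ0 γ1 : Path x₀ x) (α : Path x₀ x₀)
    (H : Path.Homotopy α (γ0.trans γ1.symm))
    (m : X)
    (p0 : Path x₀ m) (hp : ∀ t : unitInterval, p0 t = α.extend ((t : ℝ) / 2))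
    (q : Path m x)
    (hq : ∀ s : unitInterval, q s = H (s, ⟨1 / 2, by norm_num⟩)) :
    (p0.trans q).Homotopic γ0 := by
  set half : I := ⟨1 / 2, by norm_num⟩
  have hα (t : I) : p0 t = ((pathZeroTo half).map α.continuous) t := by
    have ht : (t : ℝ) / 2 = (half * t : I) := by simp [half, div_eq_inv_mul]
    rw [hp, ht, α.extend_extends']
    rfl
  have hβ (t : I) : γ0 t = ((pathZeroTo half).map (γ0.trans γ1.symm).continuous) t := by
    have ht : ((half * t : I) : ℝ) ≤ 1 / 2 := by
      simpa [half] using mul_le_of_le_one_right (by norm_num : (0 : ℝ) ≤ 1 / 2) t.2.2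
    simp only [Path.map_coe, Function.comp_apply, pathZeroTo_apply]
    rw [Path.trans_apply, dif_pos ht]
    exact congrArg γ0 (Subtype.ext (by simp [half]))
  have hsquare := Path.Homotopic.map_trans_evalAt H.toHomotopy (pathZeroTo half)
  exact (hsquare.of_apply_eq (Path.trans_apply_eq_of_apply_eq hα hq)
    (Path.trans_apply_eq_of_apply_eq (fun s => (H.source s).symm) hβ)).trans
    ⟨Path.Homotopy.reflTrans γ0⟩
end

section
/- Let X be a topological space, x₀ x : X, γ⁰ γ¹ : Path x₀ x, and α : Path x₀ x₀ a loop at x₀. Let H : Path.Homotopy α (γ⁰.trans γ¹.symm) be a homotopy rel endpoints from α to the concatenation of γ⁰ with the reverse of γ¹. Let m := α (1/2), let p¹ : Path x₀ m be the path t ↦ α (1 - t/2) (traversing the second half of α in reverse), and let q : Path m x be the path s ↦ H (s, 1/2). Then the concatenation p¹.trans q is path-homotopic to γ¹ (Path.Homotopic (p¹.trans q) γ¹). -/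
open unitInterval

private instance contractibleII : ContractibleSpace (unitInterval × unitInterval) := by
  have h : Convex ℝ ((Set.Icc (0:ℝ) 1) ×ˢ (Set.Icc (0:ℝ) 1)) :=
    (convex_Icc (0:ℝ) 1).prod (convex_Icc (0:ℝ) 1)
  have hc := h.contractibleSpace ⟨(0, 0), by simp⟩
  exact (Homeomorph.Set.prod (Set.Icc (0:ℝ) 1) (Set.Icc (0:ℝ) 1)).contractibleSpace_iff.mp hc

/-- the midpoint of the interval -/
private noncomputable def hf : unitInterval := ⟨1 / 2, by norm_num⟩

/-- The path `t ↦ 1 - t/2` in the unit interval. -/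
private noncomputable def sigmaPath : Path (1 : unitInterval) hf where
  toFun t := ⟨1 - (t : ℝ) / 2, by constructor <;> [nlinarith [t.2.1, t.2.2]; nlinarith [t.2.1, t.2.2]]⟩
  continuous_toFun := by
    apply Continuous.subtype_mk
    fun_prop
  source' := Subtype.ext (by norm_num)
  target' := Subtype.ext (by norm_num [hf])

/-- The identity path in the unit interval. -/
private def idPath : Path (0 : unitInterval) 1 := ⟨⟨id, continuous_id⟩, rfl, rfl⟩

private lemma cast_homotopic {X : Type*} [TopologicalSpace X] {a b a' b' : X}
    {p q : Path a b} (h : p.Homotopic q) (ha : a' = a) (hb : b' = b) :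
    (p.cast ha hb).Homotopic (q.cast ha hb) := by
  subst ha; subst hb
  obtain ⟨F⟩ := h
  exact ⟨F.cast (by ext t; rfl) (by ext t; rfl)⟩

/-- Given a homotopy `H` (rel endpoints) from a loop `α` at `x₀` to `γ0.trans γ1.symm`, the path
`β1` obtained by traversing the second half of `α` in reverse (i.e. `t ↦ α (1 - t/2)`) and then
following the track `s ↦ H (s, 1/2)` of the midpoint under the homotopy is path-homotopic
to `γ1`. -/
theorem homotopic_secondHalf_trans_track
    {X : Type*} [TopologicalSpace X] {x₀ x : X}
    (γ0 γ1 : Path x₀ x) (α : Path x₀ x₀)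
    (H : Path.Homotopy α (γ0.trans γ1.symm))
    (m : X) (hm : m = α.extend (1 / 2))
    (p1 : Path x₀ m) (hp : ∀ t : unitInterval, p1 t = α.extend (1 - (t : ℝ) / 2))
    (q : Path m x)
    (hq : ∀ s : unitInterval, q s = H (s, ⟨1 / 2, by norm_num⟩)) :
    (p1.trans q).Homotopic γ1 := by
  have hc : Continuous (fun p : unitInterval × unitInterval => H p) := H.continuous
  -- paths in the square
  let P1 : Path ((0 : unitInterval), (1 : unitInterval)) ((0 : unitInterval), hf) :=
    (Path.refl 0).prod sigmaPath
  let P2 : Path ((0 : unitInterval), hf) ((1 : unitInterval), hf) :=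
    idPath.prod (Path.refl hf)
  let Q1 : Path ((0 : unitInterval), (1 : unitInterval)) ((1 : unitInterval), (1 : unitInterval)) :=
    idPath.prod (Path.refl 1)
  let Q2 : Path ((1 : unitInterval), (1 : unitInterval)) ((1 : unitInterval), hf) :=
    (Path.refl 1).prod sigmaPath
  have hAB : (P1.trans P2).Homotopic (Q1.trans Q2) :=
    SimplyConnectedSpace.paths_homotopic _ _
  have hmap := hAB.map ⟨fun p => H p, hc⟩
  -- endpoint identifications
  have e0 : x₀ = H ((0 : unitInterval), (1 : unitInterval)) := by
    rw [show H ((0 : unitInterval), (1 : unitInterval)) = α 1 from H.apply_zero 1]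
    simp
  have e1 : x = H ((1 : unitInterval), hf) := by
    rw [show H ((1 : unitInterval), hf) = (γ0.trans γ1.symm) hf from H.apply_one hf]
    rw [Path.trans_apply, dif_pos (by norm_num [hf])]
    have h2 : γ0 ⟨2 * ((1:ℝ)/2), by norm_num⟩ = x := by
      rw [show (⟨2 * ((1:ℝ)/2), by norm_num⟩ : unitInterval) = 1 from Subtype.ext (by norm_num)]
      exact γ0.target
    exact h2.symm
  -- the first path composes to p1.trans q
  have key1 : p1.trans q = ((P1.trans P2).map hc).cast e0 e1 := by
    ext t
    simp only [Path.cast_coe, Path.map_coe, Function.comp_apply, Path.trans_apply]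
    split_ifs with h
    · rw [hp]
      simp only [P1, Path.prod_coe, Path.refl_apply]
      rw [show H ((0 : unitInterval), sigmaPath ⟨2 * (t:ℝ), _⟩) = α (sigmaPath ⟨2 * (t:ℝ), _⟩)
        from H.apply_zero _]
      exact α.extend_extends' (sigmaPath ⟨2 * (t:ℝ), by
        constructor <;> nlinarith [t.2.1, t.2.2, h]⟩)
    · rw [hq]
      simp only [P2, Path.prod_coe, Path.refl_apply]
      rfl
  -- the second path composes to (refl x₀).trans γ1
  have key2 : ((Q1.trans Q2).map hc).cast e0 e1 = (Path.refl x₀).trans γ1 := by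
    ext t
    simp only [Path.cast_coe, Path.map_coe, Function.comp_apply, Path.trans_apply]
    split_ifs with h
    · simp only [Q1, Path.prod_coe, Path.refl_apply]
      rw [show H (idPath ⟨2 * (t:ℝ), _⟩, (1 : unitInterval)) = α 1 from
        H.eq_fst _ (by right; rfl)]
      simp
    · simp only [Q2, Path.prod_coe, Path.refl_apply]
      rw [show H ((1 : unitInterval), sigmaPath ⟨2 * (t:ℝ) - 1, _⟩) =
        (γ0.trans γ1.symm) (sigmaPath ⟨2 * (t:ℝ) - 1, _⟩) from H.apply_one _]
      have ht : (1:ℝ) - (2 * (t:ℝ) - 1) / 2 ∈ Set.Icc (0:ℝ) 1 := by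
        constructor <;> [nlinarith [t.2.1, t.2.2]; nlinarith [t.2.1, t.2.2, h]]
      rw [Path.trans_apply]
      split_ifs with h2
      · -- 1 - (2t-1)/2 ≤ 1/2 forces t = 1
        have htt : (t:ℝ) = 1 := by
          have := t.2.2
          simp only [sigmaPath, Path.coe_mk_mk] at h2
          linarith
        simp only [sigmaPath, Path.coe_mk_mk]
        rw [show γ0 ⟨2 * ((1:ℝ) - (2 * (t:ℝ) - 1)/2), _⟩ = γ0 1 from congrArg γ0
          (Subtype.ext (by rw [Subtype.coe_mk, htt]; norm_num))]
        rw [show γ1 ⟨2 * (t:ℝ) - 1, _⟩ = γ1 1 from congrArg γ1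
          (Subtype.ext (by rw [Subtype.coe_mk, htt]; norm_num))]
        simp
      · simp only [sigmaPath, Path.coe_mk_mk]
        rw [Path.symm_apply, Function.comp_apply]
        congr 1
        apply Subtype.ext
        simp only [unitInterval.coe_symm_eq, Subtype.coe_mk]
        ring
  have h1 : (p1.trans q).Homotopic (((Q1.trans Q2).map hc).cast e0 e1) := by
    rw [key1]; exact cast_homotopic hmap e0 e1
  rw [key2] at h1
  exact h1.trans ⟨Path.Homotopy.reflTrans γ1⟩
end

section
/- Let E and X be topological spaces with X path-connected and locally path-connected, and let p : E → X be a covering map (IsCoveringMap p). Let U ⊆ X be an open path-connected subset, x₀ ∈ U, and suppose every loop in X based at x₀ is path-homotopic to a loop whose range is contained in U (equivalently, the homomorphism π₁(U, x₀) → π₁(X, x₀) induced by inclusion is surjective). If s : U → E is a continuous map with p (s u) = u for every u ∈ U (a continuous section of p over U), then there exists a continuous map S : X → E with p (S x) = x for every x ∈ X and S u = s u for every u ∈ U; that is, the section s extends to a global continuous section of p. -/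
/-!
By the lifting criterion, the identity of `X` lifts through the covering `p` to a continuous
section through `e₀ = s x₀` as soon as `p_* : π₁(E, e₀) → π₁(X, x₀)` is onto. It is onto because
every class in `π₁(X, x₀)` is represented by a loop in `U`, which `s` lifts to a loop at `e₀`.
The global section and `s` are lifts of the inclusion of the connected set `U` that agree at
`x₀`, so they agree on `U` by uniqueness of lifts.
-/

open FundamentalGroup Path.Homotopic.Quotient

theorem IsCoveringMap.exists_section_of_surjective_mapOfEq
    {E X : Type*} [TopologicalSpace E] [TopologicalSpace X]
    [PathConnectedSpace X] [LocallyPathConnectedSpace X]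
    {p : E → X} (hp : IsCoveringMap p) {e₀ : E} {x₀ : X} (he : p e₀ = x₀)
    (hsurj : Function.Surjective (mapOfEq ⟨p, hp.continuous⟩ he)) :
    ∃ S : C(X, E), S x₀ = e₀ ∧ p ∘ S = id :=
  (hp.existsUnique_continuousMap_lifts_of_range_le (f := .id X) he
    (le_top.trans_eq (MonoidHom.range_eq_top.2 hsurj).symm)).exists

theorem FundamentalGroup.mapOfEq_surjective_of_continuous_section
    {E X : Type*} [TopologicalSpace E] [TopologicalSpace X]
    {p : C(E, X)} {U : Set X} {s : U → E} (hs : Continuous s) (hsect : ∀ u : U, p (s u) = u)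
    {x₀ : X} (hx₀ : x₀ ∈ U)
    (hsurj : ∀ γ : Path x₀ x₀, ∃ α : Path x₀ x₀, Set.range α ⊆ U ∧ γ.Homotopic α) :
    Function.Surjective (mapOfEq p (hsect ⟨x₀, hx₀⟩)) := by
  intro q
  induction q using Path.Homotopic.Quotient.ind with | mk γ => ?_
  obtain ⟨α, hαU, hγα⟩ := hsurj γ
  let Γ : Path (s ⟨x₀, hx₀⟩) (s ⟨x₀, hx₀⟩) :=
    { toFun t := s ⟨α t, hαU ⟨t, rfl⟩⟩
      continuous_toFun := by fun_prop
      source' := by simp only [α.source]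
      target' := by simp only [α.target] }
  refine ⟨fromPath (mk Γ), ?_⟩
  rw [mapOfEq_apply, ← mk_map, ← mk_cast, eq.2 hγα]
  exact congrArg mk (Path.ext (funext fun t => hsect _))

theorem exists_global_section_extension_of_isCoveringMap_general
    {E X : Type*} [TopologicalSpace E] [TopologicalSpace X]
    [PathConnectedSpace X] [LocallyPathConnectedSpace X]
    (p : E → X) (hp : IsCoveringMap p)
    (U : Set X) (hUpc : IsPathConnected U)
    (x₀ : X) (hx₀ : x₀ ∈ U)
    (hsurj : ∀ γ : Path x₀ x₀, ∃ α : Path x₀ x₀, Set.range α ⊆ U ∧ γ.Homotopic α)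
    (s : U → E) (hs : Continuous s) (hsect : ∀ u : U, p (s u) = u) :
    ∃ S : X → E, Continuous S ∧ (∀ x : X, p (S x) = x) ∧ ∀ u : U, S u = s u := by
  obtain ⟨S, hS₀, hpS⟩ := hp.exists_section_of_surjective_mapOfEq (hsect ⟨x₀, hx₀⟩)
    (mapOfEq_surjective_of_continuous_section (p := ⟨p, hp.continuous⟩) hs hsect hx₀ hsurj)
  have : PreconnectedSpace U :=
    isPreconnected_iff_preconnectedSpace.mp hUpc.isConnected.isPreconnected
  have hSU : S ∘ Subtype.val = s := hp.eq_of_comp_eq (by fun_prop) hs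
    (funext fun u => (congrFun hpS u).trans (hsect u).symm) ⟨x₀, hx₀⟩ hS₀
  exact ⟨S, S.continuous, congrFun hpS, congrFun hSU⟩

/-- Monodromy principle: a continuous section of a covering map `p : E → X` over an open
path-connected subset `U` extends to a global continuous section, provided every loop of `X`
based at a point `x₀ ∈ U` is path-homotopic to a loop with range contained in `U`
(i.e. `π₁(U, x₀) → π₁(X, x₀)` is surjective). -/
theorem exists_global_section_extension_of_isCoveringMap
    {E X : Type*} [TopologicalSpace E] [TopologicalSpace X]
    [PathConnectedSpace X] [LocallyPathConnectedSpace X]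
    (p : E → X) (hp : IsCoveringMap p)
    (U : Set X) (hU : IsOpen U) (hUpc : IsPathConnected U)
    (x₀ : X) (hx₀ : x₀ ∈ U)
    (hsurj : ∀ γ : Path x₀ x₀, ∃ α : Path x₀ x₀, Set.range α ⊆ U ∧ γ.Homotopic α)
    (s : U → E) (hs : Continuous s) (hsect : ∀ u : U, p (s u) = u) :
    ∃ S : X → E, Continuous S ∧ (∀ x : X, p (S x) = x) ∧ ∀ u : U, S u = s u :=
  exists_global_section_extension_of_isCoveringMap_general p hp U hUpc x₀ hx₀ hsurj s hs hsect
end
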